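/- arXiv:2403.02104 — 2 statements merged into one kernel-verified Lean document; each statement's English description precedes it below -/
import Mathlib

section
/- Let m ≥ 2 be an integer and let u : ℝ^m ∖ {0} → ℝ^{m²} be the Misawa–Nakauchi map with components u_{ij}(x) = (1/√(m(m−1)))(−δ_{ij} + m x_i x_j / r²). Then for every x ∈ ℝ^m ∖ {0}, the squared norm of the Hessian satisfies |∇²u(x)|² = Σ_{k,l,i,j} (∂_l ∂_k u_{ij}(x))² = 2m(m+4)/r(x)⁴. -/
/-!
Up to the factor `m / √(m(m-1))` and an additive constant, `u_{ij}` is `x_i x_j / |x|²`.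
For fixed `k, l` the matrix `(∂_l ∂_k (x_i x_j / |x|²))_{ij}` has the form `Vᵀ M V`, where the
rows of `V` are `e_k`, `e_l`, `x` and `M` is a symmetric `3 × 3` matrix, so its squared Frobenius
norm is `tr (M G M G)` with `G = V Vᵀ` the Gram matrix of `e_k, e_l, x`. This trace is `2/r⁴` for
`k ≠ l` and `8/r⁴ - 8 x_k²/r⁶` for `k = l`; summing over `k, l` gives `2(m-1)(m+4)/r⁴`, and the
factor `m² / (m(m-1))` turns this into `2m(m+4)/r⁴`.
-/

noncomputable section

/-- Partial derivative of `f` in the `k`-th coordinate direction. -/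
def pd {m : ℕ} (k : Fin m) (f : EuclideanSpace ℝ (Fin m) → ℝ)
    (x : EuclideanSpace ℝ (Fin m)) : ℝ :=
  fderiv ℝ f x (EuclideanSpace.single k 1)

/-- Euclidean Laplacian `Δf = Σ_k ∂²f/∂x_k²`. -/
def lap {m : ℕ} (f : EuclideanSpace ℝ (Fin m) → ℝ)
    (x : EuclideanSpace ℝ (Fin m)) : ℝ :=
  ∑ k : Fin m, pd k (pd k f) x

/-- The Misawa–Nakauchi map `u_{ij}(x) = (1/√(m(m−1)))(−δ_{ij} + m xᵢxⱼ/r²)`. -/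
def uMN (m : ℕ) (i j : Fin m) (x : EuclideanSpace ℝ (Fin m)) : ℝ :=
  (1 / Real.sqrt ((m : ℝ) * ((m : ℝ) - 1))) *
    (-(if i = j then (1 : ℝ) else 0) + (m : ℝ) * x i * x j / ‖x‖ ^ 2)

open Matrix

theorem Matrix.sum_sq_transpose_mul_mul {ι κ : Type*} [Fintype ι] [Fintype κ]
    (V : Matrix κ ι ℝ) (M : Matrix κ κ ℝ) :
    ∑ i, ∑ j, ((Vᵀ * M * V) i j) ^ 2 = trace (M * (V * Vᵀ) * Mᵀ * (V * Vᵀ)) := by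
  calc ∑ i, ∑ j, ((Vᵀ * M * V) i j) ^ 2 = trace (Vᵀ * M * V * (Vᵀ * M * V)ᵀ) := by
        simp only [trace, diag, mul_apply (M := Vᵀ * M * V), transpose_apply, sq]
    _ = trace (Vᵀ * (M * V * Vᵀ * Mᵀ * V)) := by
        simp only [transpose_mul, transpose_transpose, Matrix.mul_assoc]
    _ = trace (M * (V * Vᵀ) * Mᵀ * (V * Vᵀ)) := by
        rw [trace_mul_comm]
        simp only [Matrix.mul_assoc]

section OuterHess

variable {ι : Type*} [DecidableEq ι] [Fintype ι]

def outerHess (y : ι → ℝ) (i j k l : ι) : ℝ :=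
  let s := (∑ a, y a ^ 2)⁻¹
  let δ : ι → ι → ℝ := fun a b => if a = b then 1 else 0
  (δ i k * δ j l + δ i l * δ j k) * s
    - 2 * (δ i k * y j * y l + δ j k * y i * y l + δ i l * y j * y k + δ j l * y i * y k
      + δ k l * y i * y j) * s ^ 2
    + 8 * y i * y j * y k * y l * s ^ 3

def hessFrame (y : ι → ℝ) (k l : ι) : Matrix (Fin 3) ι ℝ :=
  of ![Pi.single k 1, Pi.single l 1, y]

def hessCoeff (y : ι → ℝ) (k l : ι) : Matrix (Fin 3) (Fin 3) ℝ :=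
  let s := (∑ a, y a ^ 2)⁻¹
  !![0, s, -2 * y l * s ^ 2;
    s, 0, -2 * y k * s ^ 2;
    -2 * y l * s ^ 2, -2 * y k * s ^ 2, -2 * (if k = l then 1 else 0) * s ^ 2 + 8 * y k * y l * s ^ 3]

theorem outerHess_eq_transpose_mul_mul (y : ι → ℝ) (i j k l : ι) :
    outerHess y i j k l = ((hessFrame y k l)ᵀ * hessCoeff y k l * hessFrame y k l) i j := by
  simp [outerHess, hessFrame, hessCoeff, mul_apply, Fin.sum_univ_three, Pi.single_apply]
  split_ifs <;> ring

theorem hessFrame_mul_transpose (y : ι → ℝ) (k l : ι) :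
    hessFrame y k l * (hessFrame y k l)ᵀ =
      !![1, if k = l then 1 else 0, y k;
        if k = l then 1 else 0, 1, y l;
        y k, y l, ∑ a, y a ^ 2] := by
  ext a b
  fin_cases a <;> fin_cases b <;> simp [hessFrame, mul_apply, Pi.single_apply, sq, eq_comm]

theorem sum_sq_outerHess_slice {y : ι → ℝ} (hy : ∑ a, y a ^ 2 ≠ 0) (k l : ι) :
    ∑ i, ∑ j, outerHess y i j k l ^ 2 =
      let s := (∑ a, y a ^ 2)⁻¹
      2 * s ^ 2 + if k = l then 6 * s ^ 2 - 8 * s ^ 3 * y k ^ 2 else 0 := by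
  simp only [outerHess_eq_transpose_mul_mul, Matrix.sum_sq_transpose_mul_mul,
    hessFrame_mul_transpose, hessCoeff]
  simp only [trace_fin_three, mul_apply, Fin.sum_univ_three, transpose_apply, of_apply,
    cons_val_zero, cons_val_one, cons_val_two, head_cons, tail_cons]
  generalize (∑ a, y a ^ 2) = q at hy ⊢
  split_ifs with hkl
  · subst hkl
    field_simp
    ring
  · field_simp
    ring

theorem sum_sq_outerHess {y : ι → ℝ} (hy : ∑ a, y a ^ 2 ≠ 0) :
    ∑ k, ∑ l, ∑ i, ∑ j, outerHess y i j k l ^ 2 =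
      2 * (Fintype.card ι - 1 : ℝ) * (Fintype.card ι + 4) / (∑ a, y a ^ 2) ^ 2 := by
  simp only [sum_sq_outerHess_slice hy, Finset.sum_add_distrib, Finset.sum_ite_eq,
    Finset.mem_univ, if_true, Finset.sum_sub_distrib, Finset.sum_const, Finset.card_univ,
    nsmul_eq_mul, ← Finset.mul_sum]
  field_simp
  ring

end OuterHess

theorem differentiableAt_inv_norm_sq {F : Type*} [NormedAddCommGroup F] [InnerProductSpace ℝ F]
    {x : F} (hx : x ≠ 0) : DifferentiableAt ℝ (fun y : F => (‖y‖ ^ 2)⁻¹) x :=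
  (differentiableAt_id.norm_sq ℝ).inv (by simpa using hx)

section PartialDerivatives

variable {m : ℕ} {f g : EuclideanSpace ℝ (Fin m) → ℝ} {x : EuclideanSpace ℝ (Fin m)} (k : Fin m)

theorem pd_const_add (a : ℝ) :
    pd k (fun y => a + f y) = pd k f := by
  funext x
  simp only [pd, fderiv_const_add]

theorem pd_const_mul (b : ℝ) :
    pd k (fun y => b * f y) = fun x => b * pd k f x := by
  funext x
  rw [pd, show (fun y => b * f y) = b • f from rfl, fderiv_const_smul_field]
  rfl

theorem pd_const (c : ℝ) : pd k (fun _ => c) x = 0 := by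
  simp [pd]

theorem pd_coord (i : Fin m) : pd k (fun y => y i) x = if i = k then 1 else 0 := by
  rw [pd, show (fun y : EuclideanSpace ℝ (Fin m) => y i) = EuclideanSpace.proj i from rfl,
    ContinuousLinearMap.fderiv]
  simp [PiLp.single_apply]

theorem pd_add (hf : DifferentiableAt ℝ f x) (hg : DifferentiableAt ℝ g x) :
    pd k (fun y => f y + g y) x = pd k f x + pd k g x := by
  simp [pd, fderiv_fun_add hf hg]

theorem pd_sub (hf : DifferentiableAt ℝ f x) (hg : DifferentiableAt ℝ g x) :
    pd k (fun y => f y - g y) x = pd k f x - pd k g x := by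
  simp [pd, fderiv_fun_sub hf hg]

theorem pd_mul (hf : DifferentiableAt ℝ f x) (hg : DifferentiableAt ℝ g x) :
    pd k (fun y => f y * g y) x = pd k f x * g x + f x * pd k g x := by
  simp [pd, fderiv_fun_mul hf hg]
  ring

theorem pd_inv_norm_sq (hx : x ≠ 0) :
    pd k (fun y => (‖y‖ ^ 2)⁻¹) x = -2 * x k * ((‖x‖ ^ 2)⁻¹) ^ 2 := by
  have h : HasFDerivAt (fun y => (‖y‖ ^ 2)⁻¹) _ x :=
    (hasDerivAt_inv (by simpa using hx)).comp_hasFDerivAt x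
      (hasStrictFDerivAt_norm_sq x).hasFDerivAt
  rw [pd, h.fderiv]
  simp [EuclideanSpace.inner_single_right]
  ring

theorem pd_congr_of_eventuallyEq (h : f =ᶠ[nhds x] g) : pd k f x = pd k g x := by
  simp [pd, h.fderiv_eq]

end PartialDerivatives

section MisawaNakauchi

variable {m : ℕ} {x : EuclideanSpace ℝ (Fin m)}

theorem pd_coord_mul_coord_mul_inv_norm_sq (i j k : Fin m) (hx : x ≠ 0) :
    pd k (fun y => y i * y j * (‖y‖ ^ 2)⁻¹) x =
      ((if i = k then 1 else 0) * x j + x i * (if j = k then 1 else 0)) * (‖x‖ ^ 2)⁻¹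
        - 2 * x i * x j * x k * ((‖x‖ ^ 2)⁻¹ * (‖x‖ ^ 2)⁻¹) := by
  have hinv := differentiableAt_inv_norm_sq hx
  simp (disch := fun_prop) only [pd_mul, pd_coord, pd_inv_norm_sq k hx]
  ring

theorem pd_pd_coord_mul_coord_mul_inv_norm_sq (i j k l : Fin m) (hx : x ≠ 0) :
    pd l (pd k (fun y => y i * y j * (‖y‖ ^ 2)⁻¹)) x = outerHess x.ofLp i j k l := by
  have hev : pd k (fun y => y i * y j * (‖y‖ ^ 2)⁻¹) =ᶠ[nhds x] _ :=
    (eventually_ne_nhds hx).mono fun y hy => pd_coord_mul_coord_mul_inv_norm_sq i j k hy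
  have hinv := differentiableAt_inv_norm_sq hx
  rw [pd_congr_of_eventuallyEq l hev]
  simp (disch := fun_prop) only [pd_mul, pd_add, pd_sub, pd_coord, pd_const, pd_inv_norm_sq l hx]
  simp only [outerHess, EuclideanSpace.real_norm_sq_eq]
  ring

theorem uMN_eq (i j : Fin m) :
    uMN m i j = fun y => -(1 / √(m * (m - 1 : ℝ))) * (if i = j then 1 else 0)
      + m / √(m * (m - 1 : ℝ)) * (y i * y j * (‖y‖ ^ 2)⁻¹) := by
  funext y
  rw [uMN]
  ring

theorem pd_pd_uMN (i j k l : Fin m) (hx : x ≠ 0) :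
    pd l (pd k (uMN m i j)) x = m / √(m * (m - 1 : ℝ)) * outerHess x.ofLp i j k l := by
  simp only [uMN_eq, pd_const_add, pd_const_mul,
    pd_pd_coord_mul_coord_mul_inv_norm_sq i j k l hx]

end MisawaNakauchi

theorem stmt10 (m : ℕ) (hm : 2 ≤ m) (x : EuclideanSpace ℝ (Fin m)) (hx : x ≠ 0) :
    ∑ k : Fin m, ∑ l : Fin m, ∑ i : Fin m, ∑ j : Fin m,
        (pd l (pd k (uMN m i j)) x) ^ 2
      = 2 * (m : ℝ) * ((m : ℝ) + 4) / ‖x‖ ^ 4 := by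
  have hm' : (2 : ℝ) ≤ m := by exact_mod_cast hm
  have hnorm : ‖x‖ ^ 2 = ∑ a, x a ^ 2 := EuclideanSpace.real_norm_sq_eq x
  have hx' : ∑ a, x a ^ 2 ≠ 0 := by
    rw [← hnorm]
    positivity
  have hsqrt : √(m * (m - 1 : ℝ)) ^ 2 = m * (m - 1) := Real.sq_sqrt (by nlinarith)
  simp only [pd_pd_uMN _ _ _ _ hx, mul_pow, ← Finset.mul_sum, sum_sq_outerHess hx',
    Fintype.card_fin, div_pow, hsqrt, ← hnorm]
  have hm1 : (m - 1 : ℝ) ≠ 0 := by linarith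
  field_simp
end
end

section
/- Let m be an integer with 5 ≤ m ≤ 18 and set V(ρ) = (1 − ρ²)^m for ρ ∈ [0,1]. Then ∫_{B^m} ( V''(r) + (m−1)V'(r)/r + 2(m−4)V(r)/r² )² dx − 5(m−1)(m+11) ∫_{B^m} V(r)²/r⁴ dx < 0, where r = r(x) = |x| and B^m is the open unit ball in ℝ^m. (This quantity is the second variation of the bienergy at the proper biharmonic map ṽ of Theorem 1.3 in the direction determined by V, so ṽ is an unstable critical point of the bienergy.) -/
/-!
Both integrands are radial, so polar coordinates turn the two integrals into `∫₀¹ ρ^(m-1) f(ρ) dρ`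
times the same positive constant `m |B^m|`. For `V = (1 - ρ²)^m` and
`Q = V'' + (m-1) V'/ρ + 2(m-4) V/ρ²` one finds `ρ^(m-1) Q² = 4 ρ^(m-5) (1-ρ²)^(2m-4) B(ρ²)²` with
`B(t) = (m-4) - (m+4)(m-2) t + (3m-4)(m+1) t²`, and `ρ^(m-1) V²/ρ⁴ = ρ^(m-5) (1-ρ²)^(2m)`.
Both are therefore combinations of the moments `J(a, b) = ∫₀¹ ρ^a (1-ρ²)^b dρ`, and integration by
parts gives the Beta recursions `(a+2b+3) J(a+2, b) = (a+1) J(a, b)` and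
`(a+2b+3) J(a, b+1) = 2(b+1) J(a, b)`. They reduce the second variation to
`16 m (m-1) q(m) / ((5m-10)(5m-8)(5m-6)(5m-4)) · J(m-5, 2m-4)` for a sextic `q`, which is negative
at the integers `1 ≤ m ≤ 18` and positive from `m = 19` on.
-/

noncomputable section

open Real MeasureTheory

/-- The test function `V(ρ) = (1 − ρ²)^m`. -/
def Vtest (m : ℕ) (ρ : ℝ) : ℝ := (1 - ρ ^ 2) ^ m

open Set intervalIntegral

theorem integral_ball_fun_norm_addHaar {E : Type*} [NormedAddCommGroup E] [NormedSpace ℝ E]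
    [MeasurableSpace E] [BorelSpace E] [FiniteDimensional ℝ E] [Nontrivial E]
    (μ : Measure E) [μ.IsAddHaarMeasure] (g : ℝ → ℝ) {r : ℝ} (hr : 0 ≤ r) :
    ∫ x in Metric.ball (0 : E) r, g ‖x‖ ∂μ =
      Module.finrank ℝ E * μ.real (Metric.ball 0 1) *
        ∫ ρ in (0 : ℝ)..r, ρ ^ (Module.finrank ℝ E - 1) * g ρ := by
  have hball : ∫ x in Metric.ball (0 : E) r, g ‖x‖ ∂μ = ∫ x, (Iio r).indicator g ‖x‖ ∂μ := by
    rw [← MeasureTheory.integral_indicator measurableSet_ball]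
    congr 1 with x
    by_cases h : ‖x‖ < r <;> simp [indicator, h]
  have hradial : ∫ ρ in Ioi (0 : ℝ), ρ ^ (Module.finrank ℝ E - 1) • (Iio r).indicator g ρ =
      ∫ ρ in (0 : ℝ)..r, ρ ^ (Module.finrank ℝ E - 1) * g ρ := by
    simp only [smul_eq_mul,
      ← indicator_mul_right (Iio r) (fun ρ : ℝ => ρ ^ (Module.finrank ℝ E - 1)) g]
    rw [setIntegral_indicator measurableSet_Iio, Ioi_inter_Iio, integral_of_le hr,
      integral_Ioc_eq_integral_Ioo]
  rw [hball, integral_fun_norm_addHaar, hradial, nsmul_eq_mul, smul_eq_mul, mul_assoc]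

/-- Equals `B((a+1)/2, b+1) / 2`, by the substitution `t = ρ²`. -/
def betaMoment (a b : ℕ) : ℝ := ∫ ρ in (0 : ℝ)..1, ρ ^ a * (1 - ρ ^ 2) ^ b

theorem intervalIntegrable_pow_mul_one_sub_sq_pow (a b : ℕ) (x y : ℝ) :
    IntervalIntegrable (fun ρ : ℝ => ρ ^ a * (1 - ρ ^ 2) ^ b) volume x y :=
  (by fun_prop : Continuous fun ρ : ℝ => ρ ^ a * (1 - ρ ^ 2) ^ b).intervalIntegrable x y

theorem betaMoment_pos (a b : ℕ) : 0 < betaMoment a b := by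
  refine intervalIntegral_pos_of_pos_on (intervalIntegrable_pow_mul_one_sub_sq_pow a b 0 1)
    (fun ρ hρ => ?_) zero_lt_one
  have h : 0 < 1 - ρ ^ 2 := by nlinarith [hρ.1, hρ.2]
  exact mul_pos (pow_pos hρ.1 a) (pow_pos h b)

theorem betaMoment_succ_right_eq_sub (a b : ℕ) :
    betaMoment a (b + 1) = betaMoment a b - betaMoment (a + 2) b := by
  rw [betaMoment, betaMoment, betaMoment, ← integral_sub
    (intervalIntegrable_pow_mul_one_sub_sq_pow a b 0 1)
    (intervalIntegrable_pow_mul_one_sub_sq_pow (a + 2) b 0 1)]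
  congr 1 with ρ
  ring

theorem mul_betaMoment_succ_right (a b : ℕ) :
    (a + 1) * betaMoment a (b + 1) = 2 * (b + 1) * betaMoment (a + 2) b := by
  have hderiv (ρ : ℝ) : HasDerivAt (fun ρ : ℝ => ρ ^ (a + 1) * (1 - ρ ^ 2) ^ (b + 1))
      ((a + 1) * (ρ ^ a * (1 - ρ ^ 2) ^ (b + 1)) - 2 * (b + 1) * (ρ ^ (a + 2) * (1 - ρ ^ 2) ^ b))
      ρ := by
    refine ((hasDerivAt_pow (a + 1) ρ).fun_mul
      (((hasDerivAt_pow 2 ρ).const_sub 1).fun_pow (b + 1))).congr_deriv ?_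
    simp only [Nat.add_sub_cancel]
    push_cast
    ring
  have hint₁ := (intervalIntegrable_pow_mul_one_sub_sq_pow a (b + 1) 0 1).const_mul ((a : ℝ) + 1)
  have hint₂ := (intervalIntegrable_pow_mul_one_sub_sq_pow (a + 2) b 0 1).const_mul
    (2 * ((b : ℝ) + 1))
  have hftc := integral_eq_sub_of_hasDerivAt (fun ρ _ => hderiv ρ) (hint₁.sub hint₂)
  rw [integral_sub hint₁ hint₂, intervalIntegral.integral_const_mul,
    intervalIntegral.integral_const_mul] at hftc
  -- the boundary term `ρ^(a+1) (1-ρ²)^(b+1)` vanishes at both ends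
  norm_num at hftc
  rw [betaMoment, betaMoment]
  linarith

theorem betaMoment_add_two (a b : ℕ) :
    betaMoment (a + 2) b = (a + 1) / (a + 2 * b + 3) * betaMoment a b := by
  rw [div_mul_eq_mul_div, eq_div_iff (by positivity)]
  linear_combination (a + 1) * betaMoment_succ_right_eq_sub a b - mul_betaMoment_succ_right a b

theorem betaMoment_succ_right (a b : ℕ) :
    betaMoment a (b + 1) = 2 * (b + 1) / (a + 2 * b + 3) * betaMoment a b := by
  rw [div_mul_eq_mul_div, eq_div_iff (by positivity)]
  linear_combination mul_betaMoment_succ_right a b + 2 * (b + 1) * betaMoment_succ_right_eq_sub a b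

theorem integral_mul_sq_quadratic_eq_betaMoment (a b : ℕ) (p₀ p₁ p₂ : ℝ) :
    ∫ ρ in (0 : ℝ)..1, ρ ^ a * (1 - ρ ^ 2) ^ b * (p₀ + p₁ * ρ ^ 2 + p₂ * ρ ^ 4) ^ 2 =
      p₀ ^ 2 * betaMoment a b + 2 * p₀ * p₁ * betaMoment (a + 2) b
        + (p₁ ^ 2 + 2 * p₀ * p₂) * betaMoment (a + 4) b + 2 * p₁ * p₂ * betaMoment (a + 6) b
        + p₂ ^ 2 * betaMoment (a + 8) b := by
  simp only [betaMoment, ← intervalIntegral.integral_const_mul]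
  rw [← intervalIntegral.integral_add, ← intervalIntegral.integral_add,
    ← intervalIntegral.integral_add, ← intervalIntegral.integral_add]
  · congr 1 with ρ
    ring
  all_goals exact Continuous.intervalIntegrable (by fun_prop) 0 1

theorem hasDerivAt_Vtest (n : ℕ) (ρ : ℝ) :
    HasDerivAt (Vtest (n + 1)) (-2 * (n + 1) * ρ * Vtest n ρ) ρ := by
  refine (((hasDerivAt_pow 2 ρ).const_sub 1).fun_pow (n + 1)).congr_deriv ?_
  simp only [Vtest, Nat.add_sub_cancel]
  push_cast
  ring

theorem deriv_Vtest (n : ℕ) : deriv (Vtest (n + 1)) = fun ρ => -2 * (n + 1) * ρ * Vtest n ρ :=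
  funext fun ρ => (hasDerivAt_Vtest n ρ).deriv

theorem deriv_deriv_Vtest (n : ℕ) (ρ : ℝ) :
    deriv (deriv (Vtest (n + 2))) ρ =
      -2 * (n + 2) * Vtest (n + 1) ρ + 4 * (n + 2) * (n + 1) * ρ ^ 2 * Vtest n ρ := by
  rw [deriv_Vtest]
  refine (((hasDerivAt_id' ρ).const_mul _).fun_mul (hasDerivAt_Vtest n ρ)).deriv.trans ?_
  push_cast
  ring

/-- On a radial function `V(|x|)` on `ℝ^m` this is `Δ + 2(m - 4)/|x|²`. -/
def radialOp (m : ℕ) (V : ℝ → ℝ) (ρ : ℝ) : ℝ :=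
  deriv (deriv V) ρ + ((m : ℝ) - 1) * deriv V ρ / ρ + 2 * ((m : ℝ) - 4) * V ρ / ρ ^ 2

theorem radialOp_Vtest {k : ℕ} {ρ : ℝ} (hρ : ρ ≠ 0) :
    radialOp (k + 5) (Vtest (k + 5)) ρ =
      2 * (1 - ρ ^ 2) ^ (k + 3) *
        ((k + 1) - (k + 9) * (k + 3) * ρ ^ 2 + (3 * k + 11) * (k + 6) * ρ ^ 4) / ρ ^ 2 := by
  rw [radialOp, deriv_deriv_Vtest (k + 3), deriv_Vtest (k + 4)]
  simp only [Vtest]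
  field_simp
  push_cast
  ring

theorem integral_pow_mul_radialOp_Vtest_sq (k : ℕ) :
    ∫ ρ in (0 : ℝ)..1, ρ ^ (k + 4) * radialOp (k + 5) (Vtest (k + 5)) ρ ^ 2 =
      4 * ∫ ρ in (0 : ℝ)..1, ρ ^ k * (1 - ρ ^ 2) ^ (2 * k + 6) *
        ((k + 1) + -((k + 9) * (k + 3)) * ρ ^ 2 + (3 * k + 11) * (k + 6) * ρ ^ 4) ^ 2 := by
  rw [← intervalIntegral.integral_const_mul]
  refine integral_congr_uIoo fun ρ hρ => ?_
  have hρ0 : ρ ≠ 0 := by rw [uIoo_of_le zero_le_one] at hρ; exact hρ.1.ne'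
  rw [radialOp_Vtest hρ0]
  field_simp
  ring

theorem integral_pow_mul_Vtest_sq_div (k : ℕ) :
    ∫ ρ in (0 : ℝ)..1, ρ ^ (k + 4) * (Vtest (k + 5) ρ ^ 2 / ρ ^ 4) = betaMoment k (2 * k + 10) := by
  refine integral_congr_uIoo fun ρ hρ => ?_
  have hρ0 : ρ ≠ 0 := by rw [uIoo_of_le zero_le_one] at hρ; exact hρ.1.ne'
  simp only [Vtest]
  field_simp
  ring

def instabilityPoly (x : ℝ) : ℝ :=
  x ^ 6 - 21 * x ^ 5 + 104 * x ^ 4 - 1372 * x ^ 3 + 3684 * x ^ 2 - 3128 * x + 660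

theorem instabilityPoly_neg {m : ℕ} (h5 : 5 ≤ m) (h18 : m ≤ 18) : instabilityPoly m < 0 := by
  interval_cases m <;> norm_num [instabilityPoly]

theorem radial_secondVariation_eq (k : ℕ) :
    (∫ ρ in (0 : ℝ)..1, ρ ^ (k + 4) * radialOp (k + 5) (Vtest (k + 5)) ρ ^ 2)
      - 5 * (((k + 5 : ℕ) : ℝ) - 1) * (((k + 5 : ℕ) : ℝ) + 11) *
        (∫ ρ in (0 : ℝ)..1, ρ ^ (k + 4) * (Vtest (k + 5) ρ ^ 2 / ρ ^ 4)) =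
      16 * (k + 5) * (k + 4) * instabilityPoly (k + 5) /
        ((5 * k + 15) * (5 * k + 17) * (5 * k + 19) * (5 * k + 21)) * betaMoment k (2 * k + 6) := by
  rw [integral_pow_mul_radialOp_Vtest_sq, integral_pow_mul_Vtest_sq_div,
    integral_mul_sq_quadratic_eq_betaMoment, betaMoment_add_two (k + 6),
    betaMoment_add_two (k + 4), betaMoment_add_two (k + 2), betaMoment_add_two k,
    betaMoment_succ_right k (2 * k + 9), betaMoment_succ_right k (2 * k + 8),
    betaMoment_succ_right k (2 * k + 7), betaMoment_succ_right k (2 * k + 6), instabilityPoly]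
  push_cast
  field_simp
  ring

theorem stmt19 (m : ℕ) (hm : 5 ≤ m) (hm' : m ≤ 18) :
    (∫ x in Metric.ball (0 : EuclideanSpace ℝ (Fin m)) 1,
        (deriv (deriv (Vtest m)) ‖x‖ + ((m : ℝ) - 1) * deriv (Vtest m) ‖x‖ / ‖x‖
          + 2 * ((m : ℝ) - 4) * Vtest m ‖x‖ / ‖x‖ ^ 2) ^ 2)
      - 5 * ((m : ℝ) - 1) * ((m : ℝ) + 11) *
        (∫ x in Metric.ball (0 : EuclideanSpace ℝ (Fin m)) 1,
          (Vtest m ‖x‖) ^ 2 / ‖x‖ ^ 4) < 0 := by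
  obtain ⟨k, rfl⟩ : ∃ k, m = k + 5 := ⟨m - 5, by omega⟩
  have hpolar (g : ℝ → ℝ) := integral_ball_fun_norm_addHaar
    (volume : Measure (EuclideanSpace ℝ (Fin (k + 5)))) g zero_le_one
  simp only [finrank_euclideanSpace_fin, show k + 5 - 1 = k + 4 from rfl] at hpolar
  change (∫ x in _, radialOp (k + 5) (Vtest (k + 5)) ‖x‖ ^ 2) - _ < 0
  rw [hpolar (fun ρ => radialOp (k + 5) (Vtest (k + 5)) ρ ^ 2),
    hpolar (fun ρ => Vtest (k + 5) ρ ^ 2 / ρ ^ 4), mul_left_comm _ (_ * _), ← mul_sub,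
    radial_secondVariation_eq]
  have hvol : 0 < volume.real (Metric.ball (0 : EuclideanSpace ℝ (Fin (k + 5))) 1) :=
    ENNReal.toReal_pos (Metric.measure_ball_pos volume 0 one_pos).ne' measure_ball_lt_top.ne
  have hpoly := instabilityPoly_neg (m := k + 5) hm hm'
  push_cast at hpoly
  refine mul_neg_of_pos_of_neg (by positivity) (mul_neg_of_neg_of_pos ?_ (betaMoment_pos _ _))
  exact div_neg_of_neg_of_pos (mul_neg_of_pos_of_neg (by positivity) hpoly) (by positivity)
end
end
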